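/- Let α ∈ (0,1) and n = 1. The fractional gradient of the indicator of an interval is given explicitly by ∇^α χ_{(x−r, x+r)}(y) = (μ_{1,α}/α)(|y − x + r|^{−α} − |y − x − r|^{−α}) for a.e. y ∈ ℝ, where μ_{1,α} = 2^α π^{−1/2} Γ(1 + α/2)/Γ((1−α)/2). Consequently, ∇^α χ_{(x−r, x+r)} belongs to L^{1/α,∞}(ℝ) but not to L^{1/α,s}(ℝ) for any s ∈ [1,∞). -/

import Mathlib

/-!
Translating by `y`, the integral defining `∇^α χ_(a,b)(y)` becomes an integral of the odd kernel
`u / |u|^(2+α)` over `(a-y, b-y)` when `y ∉ [a,b]`, or minus its integral over the complement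
of that interval when `y ∈ (a,b)`. Since `-|u|^(-α)/α` is a primitive of the kernel on each
half-line and vanishes at infinity, both cases give `(|y-a|^(-α) - |y-b|^(-α))/α`.

With `C = μ_{1,α}/α`, the level set `{t < |∇^α χ|}` is then contained in two balls of radius
`(2C/t)^(1/α)` around the endpoints and, for large `t`, contains an interval of length
`(2t/C)^(-1/α)` to the left of `a`. So `t |{t < |∇^α χ|}|^α` stays bounded, but is bounded
below by `C/2` for large `t`, making `∫ (t |{t < |∇^α χ|}|^α)^s dt/t` diverge.
-/

open MeasureTheory Metric Set Filter
open scoped ENNReal NNReal Topology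

/-- The normalizing constant `μ_{1,α} = 2^α π^{-1/2} Γ((2+α)/2)/Γ((1-α)/2)`. -/
noncomputable def mu1 (α : ℝ) : ℝ :=
  2 ^ α * Real.pi ^ (-(1 : ℝ) / 2) * Real.Gamma ((2 + α) / 2) / Real.Gamma ((1 - α) / 2)

/-- The one-dimensional fractional `α`-gradient. -/
noncomputable def fracGrad1 (α : ℝ) (f : ℝ → ℝ) (y : ℝ) : ℝ :=
  mu1 α * ∫ z : ℝ, (z - y) * (f z - f y) / |z - y| ^ (2 + α)

section RieszKernel

variable {α : ℝ}

theorem hasDerivAt_neg_abs_rpow_neg_div (hα : α ≠ 0) {u : ℝ} (hu : u ≠ 0) :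
    HasDerivAt (fun u : ℝ => -|u| ^ (-α) / α) (u / |u| ^ (2 + α)) u := by
  have hu' : 0 < |u| := abs_pos.mpr hu
  refine (((hasDerivAt_abs hu).rpow_const (Or.inl hu'.ne')).neg.div_const α).congr_deriv ?_
  rw [show -α - 1 = 1 - (2 + α) by ring, Real.rpow_sub hu', Real.rpow_one]
  conv_rhs => arg 1; rw [← sign_mul_abs u]
  field_simp

theorem tendsto_neg_abs_rpow_neg_div_atTop (hα : 0 < α) :
    Tendsto (fun u : ℝ => -|u| ^ (-α) / α) atTop (𝓝 0) := by
  simpa using ((tendsto_rpow_neg_atTop hα).comp tendsto_abs_atTop_atTop).neg.div_const α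

theorem integrableOn_Ioi_div_abs_rpow (hα : 0 < α) {c : ℝ} (hc : 0 < c) :
    IntegrableOn (fun u : ℝ => u / |u| ^ (2 + α)) (Ioi c) :=
  integrableOn_Ioi_deriv_of_nonneg' (fun u hu => hasDerivAt_neg_abs_rpow_neg_div hα.ne'
    (hc.trans_le hu).ne') (fun u hu => by have : 0 ≤ u := hc.le.trans hu.out.le; positivity)
    (tendsto_neg_abs_rpow_neg_div_atTop hα)

theorem integral_Ioi_div_abs_rpow (hα : 0 < α) {c : ℝ} (hc : 0 < c) :
    ∫ u in Ioi c, u / |u| ^ (2 + α) = |c| ^ (-α) / α := by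
  rw [integral_Ioi_of_hasDerivAt_of_nonneg' (fun u hu => hasDerivAt_neg_abs_rpow_neg_div hα.ne'
    (hc.trans_le hu).ne') (fun u hu => by have : 0 ≤ u := hc.le.trans hu.out.le; positivity)
    (tendsto_neg_abs_rpow_neg_div_atTop hα)]
  ring

theorem integral_Ioo_div_abs_rpow (hα : α ≠ 0) {p q : ℝ} (hpq : p ≤ q) (h0 : 0 ∉ Icc p q) :
    ∫ u in Ioo p q, u / |u| ^ (2 + α) = (|p| ^ (-α) - |q| ^ (-α)) / α := by
  have hne : ∀ u ∈ uIcc p q, u ≠ 0 := fun u hu h => h0 (h ▸ uIcc_of_le hpq ▸ hu)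
  rw [← integral_Ioc_eq_integral_Ioo, ← intervalIntegral.integral_of_le hpq,
    intervalIntegral.integral_eq_sub_of_hasDerivAt
      (fun u hu => hasDerivAt_neg_abs_rpow_neg_div hα (hne u hu))
      (ContinuousOn.intervalIntegrable fun u hu => ?_)]
  · ring
  · exact (continuousAt_id.div ((continuous_abs.continuousAt).rpow_const (Or.inl
      (abs_pos.mpr (hne u hu)).ne')) (by positivity [abs_pos.mpr (hne u hu)])).continuousWithinAt

theorem div_abs_rpow_neg (u : ℝ) : -u / |-u| ^ (2 + α) = -(u / |u| ^ (2 + α)) := by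
  rw [abs_neg, neg_div]

theorem integrableOn_Iic_div_abs_rpow (hα : 0 < α) {c : ℝ} (hc : c < 0) :
    IntegrableOn (fun u : ℝ => u / |u| ^ (2 + α)) (Iic c) := by
  have h := ((Measure.measurePreserving_neg volume).integrableOn_comp_preimage
    (Homeomorph.neg ℝ).measurableEmbedding).mpr
    (integrableOn_Ioi_div_abs_rpow hα (neg_pos.mpr hc))
  have h' : IntegrableOn (fun u : ℝ => -(u / |u| ^ (2 + α))) (Iio c) := by
    simpa only [Function.comp_def, div_abs_rpow_neg, neg_preimage, neg_Ioi, neg_neg] using h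
  rw [integrableOn_Iic_iff_integrableOn_Iio]
  exact h'.neg.congr_fun (fun u _ => neg_neg _) measurableSet_Iio

theorem integral_Iic_div_abs_rpow (hα : 0 < α) {c : ℝ} (hc : c < 0) :
    ∫ u in Iic c, u / |u| ^ (2 + α) = -(|c| ^ (-α) / α) := by
  calc ∫ u in Iic c, u / |u| ^ (2 + α) = ∫ u in Iic c, -(-u / |-u| ^ (2 + α)) := by
        simp only [div_abs_rpow_neg, neg_neg]
    _ = -(|c| ^ (-α) / α) := by
        rw [integral_neg, integral_comp_neg_Iic c (fun u => u / |u| ^ (2 + α)),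
          integral_Ioi_div_abs_rpow hα (neg_pos.mpr hc), abs_neg]

theorem integral_div_abs_rpow_mul_indicator_sub (hα : 0 < α) {p q : ℝ} (hpq : p < q)
    (hp : p ≠ 0) (hq : q ≠ 0) :
    ∫ u, u * ((Ioo p q).indicator 1 u - (Ioo p q).indicator 1 0) / |u| ^ (2 + α)
      = (|p| ^ (-α) - |q| ^ (-α)) / α := by
  set k : ℝ → ℝ := fun u => u / |u| ^ (2 + α)
  by_cases h0 : (0 : ℝ) ∈ Ioo p q
  · have hsplit : (fun u : ℝ => u * ((Ioo p q).indicator 1 u - (Ioo p q).indicator 1 0)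
        / |u| ^ (2 + α)) = fun u => -((Iic p ∪ Ici q).indicator k u) := by
      funext u
      by_cases hu : u ∈ Ioo p q
      · have hu' : u ∉ Iic p ∪ Ici q := by simp [hu.1, hu.2]
        simp [hu, hu', h0]
      · have hu' : u ∈ Iic p ∪ Ici q := by simpa [or_iff_not_imp_left] using hu
        simp [k, hu, hu', h0, neg_div]
    rw [hsplit, integral_neg, integral_indicator (measurableSet_Iic.union measurableSet_Ici),
      setIntegral_union (Iic_disjoint_Ici.mpr hpq.not_ge) measurableSet_Ici
        (integrableOn_Iic_div_abs_rpow hα h0.1)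
        ((integrableOn_Ici_iff_integrableOn_Ioi).mpr (integrableOn_Ioi_div_abs_rpow hα h0.2)),
      integral_Ici_eq_integral_Ioi, integral_Iic_div_abs_rpow hα h0.1,
      integral_Ioi_div_abs_rpow hα h0.2]
    ring
  · have hout : (fun u : ℝ => u * ((Ioo p q).indicator 1 u - (Ioo p q).indicator 1 0)
        / |u| ^ (2 + α)) = (Ioo p q).indicator k := by
      funext u
      by_cases hu : u ∈ Ioo p q <;> simp [k, hu, h0]
    have h0' : (0 : ℝ) ∉ Icc p q := fun h =>
      h0 ⟨lt_of_le_of_ne h.1 hp, lt_of_le_of_ne h.2 hq.symm⟩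
    rw [hout, integral_indicator measurableSet_Ioo, integral_Ioo_div_abs_rpow hα.ne' hpq.le h0']

theorem integral_sub_mul_indicator_sub (hα : 0 < α) {a b y : ℝ} (hab : a < b)
    (hya : y ≠ a) (hyb : y ≠ b) :
    ∫ z, (z - y) * ((Ioo a b).indicator 1 z - (Ioo a b).indicator 1 y) / |z - y| ^ (2 + α)
      = (|y - a| ^ (-α) - |y - b| ^ (-α)) / α := by
  have hind : ∀ z, (Ioo a b).indicator (1 : ℝ → ℝ) z = (Ioo (a - y) (b - y)).indicator 1 (z - y) :=
    fun z => by simp [indicator_apply, sub_lt_sub_iff_right]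
  simp_rw [hind, sub_self]
  rw [integral_sub_right_eq_self (fun u => u * ((Ioo (a - y) (b - y)).indicator 1 u
      - (Ioo (a - y) (b - y)).indicator 1 0) / |u| ^ (2 + α)) y,
    integral_div_abs_rpow_mul_indicator_sub hα (by linarith) (sub_ne_zero.mpr hya.symm)
      (sub_ne_zero.mpr hyb.symm), abs_sub_comm a, abs_sub_comm b]

end RieszKernel

theorem measure_setOf_lt_abs_congr {X : Type*} [MeasurableSpace X] {μ : Measure X} {f g : X → ℝ}
    (hfg : f =ᵐ[μ] g) (t : ℝ) : μ {y | t < |f y|} = μ {y | t < |g y|} :=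
  measure_congr (hfg.mono fun y hy => show (t < |f y|) = (t < |g y|) by rw [hy])

section LevelSets

variable {α C t a b : ℝ}

theorem setOf_lt_mul_abs_sub_rpow_subset_ball (hα : 0 < α) (hC : 0 < C) (ht : 0 < t) :
    {y : ℝ | t < C * |y - a| ^ (-α)} ⊆ ball a ((C / t) ^ α⁻¹) := by
  intro y hy
  rw [mem_ball, Real.dist_eq]
  by_contra! h
  have hle : |y - a| ^ (-α) ≤ t / C := by
    have := Real.rpow_le_rpow_of_nonpos (by positivity) h (neg_nonpos.mpr hα.le)
    rwa [Real.rpow_neg (Real.rpow_nonneg (div_pos hC ht).le _),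
      Real.rpow_inv_rpow (div_pos hC ht).le hα.ne', inv_div] at this
  have : C * |y - a| ^ (-α) ≤ t := by
    calc C * |y - a| ^ (-α) ≤ C * (t / C) := by gcongr
      _ = t := by field_simp
  exact hy.not_ge this

theorem mul_volume_setOf_lt_abs_rpow_sub_rpow_le (hα : 0 < α) (hC : 0 < C) (ht : 0 < t) :
    t * (volume {y : ℝ | t < |C * (|y - a| ^ (-α) - |y - b| ^ (-α))|}).toReal ^ α
      ≤ 4 ^ α * (2 * C) := by
  set s := (C / (t / 2)) ^ α⁻¹
  have hsub : {y : ℝ | t < |C * (|y - a| ^ (-α) - |y - b| ^ (-α))|}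
      ⊆ ball a s ∪ ball b s := by
    intro y hy
    have hP : 0 ≤ |y - a| ^ (-α) := by positivity
    have hQ : 0 ≤ |y - b| ^ (-α) := by positivity
    have hsum : |C * (|y - a| ^ (-α) - |y - b| ^ (-α))| ≤
        C * |y - a| ^ (-α) + C * |y - b| ^ (-α) := by
      rw [abs_mul, abs_of_pos hC, ← mul_add]
      gcongr
      exact abs_le.mpr ⟨by linarith, by linarith⟩
    by_cases h : t / 2 < C * |y - a| ^ (-α)
    · exact Or.inl (setOf_lt_mul_abs_sub_rpow_subset_ball hα hC (by positivity) h)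
    · exact Or.inr (setOf_lt_mul_abs_sub_rpow_subset_ball hα hC (by positivity)
        (show t / 2 < C * |y - b| ^ (-α) by linarith [hy.out]))
  have hvol : (volume {y : ℝ | t < |C * (|y - a| ^ (-α) - |y - b| ^ (-α))|}).toReal ≤ 4 * s := by
    refine ENNReal.toReal_le_of_le_ofReal (by positivity) ((measure_mono hsub).trans
      ((measure_union_le _ _).trans ?_))
    rw [Real.volume_ball, Real.volume_ball, ← ENNReal.ofReal_add (by positivity) (by positivity)]
    exact ENNReal.ofReal_le_ofReal (by linarith)
  have hsα : s ^ α = C / (t / 2) := by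
    rw [← Real.rpow_mul (by positivity), inv_mul_cancel₀ hα.ne', Real.rpow_one]
  calc t * (volume {y : ℝ | t < |C * (|y - a| ^ (-α) - |y - b| ^ (-α))|}).toReal ^ α
      ≤ t * (4 * s) ^ α := by gcongr
    _ = 4 ^ α * (2 * C) := by
      rw [Real.mul_rpow (by norm_num) (by positivity), hsα]
      field_simp

theorem Ioo_subset_setOf_lt_abs_rpow_sub_rpow (hα : 0 < α) (hC : 0 < C)
    (hab : a < b) (ht : C * (b - a) ^ (-α) ≤ t) :
    Ioo (a - (2 * t / C) ^ (-α⁻¹)) a ⊆ {y : ℝ | t < |C * (|y - a| ^ (-α) - |y - b| ^ (-α))|} := by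
  intro y ⟨hy₁, hy₂⟩
  have ht0 : 0 < t := lt_of_lt_of_le (by positivity) ht
  have hnear : 2 * t / C < |y - a| ^ (-α) := by
    have h := Real.rpow_lt_rpow_of_neg (abs_pos.mpr (sub_ne_zero.mpr hy₂.ne))
      (show |y - a| < (2 * t / C) ^ (-α⁻¹) by rw [abs_of_neg (by linarith)]; linarith)
      (neg_lt_zero.mpr hα)
    rwa [← Real.rpow_mul (by positivity), neg_mul_neg, inv_mul_cancel₀ hα.ne',
      Real.rpow_one] at h
  have hfar : |y - b| ^ (-α) ≤ t / C := by
    calc |y - b| ^ (-α) ≤ (b - a) ^ (-α) :=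
          Real.rpow_le_rpow_of_nonpos (by linarith) (by rw [abs_of_neg (by linarith)]; linarith)
            (neg_nonpos.mpr hα.le)
      _ ≤ t / C := by rwa [le_div_iff₀ hC, mul_comm]
  have : t < C * (|y - a| ^ (-α) - |y - b| ^ (-α)) := by
    calc t = C * (2 * t / C - t / C) := by field_simp; ring
      _ < C * (|y - a| ^ (-α) - |y - b| ^ (-α)) := mul_lt_mul_of_pos_left (by linarith) hC
  exact this.trans_le (le_abs_self _)

theorem ofReal_le_mul_volume_setOf_lt_abs_rpow_sub_rpow (hα : 0 < α) (hC : 0 < C) (hab : a < b)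
    (ht : C * (b - a) ^ (-α) ≤ t) :
    ENNReal.ofReal (C / 2) ≤
      ENNReal.ofReal t * volume {y : ℝ | t < |C * (|y - a| ^ (-α) - |y - b| ^ (-α))|} ^ α := by
  have ht0 : 0 < t := lt_of_lt_of_le (by positivity) ht
  set δ := (2 * t / C) ^ (-α⁻¹)
  have hδ : 0 < δ := by positivity
  have hδα : t * δ ^ α = C / 2 := by
    rw [← Real.rpow_mul (by positivity), neg_mul, inv_mul_cancel₀ hα.ne', Real.rpow_neg_one]
    field_simp
  have hvol : ENNReal.ofReal δ ≤ volume {y : ℝ | t < |C * (|y - a| ^ (-α) - |y - b| ^ (-α))|} := by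
    simpa using measure_mono (μ := volume) (Ioo_subset_setOf_lt_abs_rpow_sub_rpow hα hC hab ht)
  calc ENNReal.ofReal (C / 2) = ENNReal.ofReal t * ENNReal.ofReal δ ^ α := by
        rw [ENNReal.ofReal_rpow_of_pos hδ, ← ENNReal.ofReal_mul ht0.le, hδα]
    _ ≤ _ := by gcongr

end LevelSets

theorem lintegral_Ioi_inv_ofReal_eq_top {t₀ : ℝ} (ht₀ : 0 < t₀) :
    ∫⁻ t in Ioi t₀, (ENNReal.ofReal t)⁻¹ = ⊤ := by
  by_contra hfin
  refine not_integrableOn_Ioi_inv (a := t₀) ⟨by fun_prop, ?_⟩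
  rw [HasFiniteIntegral, setLIntegral_congr_fun measurableSet_Ioi fun t ht => by
    rw [Real.enorm_eq_ofReal (inv_pos.mpr (ht₀.trans ht)).le,
      ENNReal.ofReal_inv_of_pos (ht₀.trans ht)]]
  exact lt_top_iff_ne_top.mpr hfin

theorem lintegral_Ioi_div_ofReal_eq_top {f : ℝ → ℝ≥0∞} {c : ℝ≥0∞} (hc : c ≠ 0) {t₀ : ℝ}
    (ht₀ : 0 < t₀) (hf : ∀ t, t₀ ≤ t → c ≤ f t) :
    ∫⁻ t in Ioi 0, f t / ENNReal.ofReal t = ⊤ := by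
  rw [eq_top_iff]
  calc ⊤ = c * ∫⁻ t in Ioi t₀, (ENNReal.ofReal t)⁻¹ := by
        rw [lintegral_Ioi_inv_ofReal_eq_top ht₀, ENNReal.mul_top hc]
    _ = ∫⁻ t in Ioi t₀, c / ENNReal.ofReal t := by
        simp only [div_eq_mul_inv]
        exact (lintegral_const_mul c (by fun_prop)).symm
    _ ≤ ∫⁻ t in Ioi t₀, f t / ENNReal.ofReal t :=
        setLIntegral_mono' measurableSet_Ioi fun t ht => by gcongr; exact hf t (le_of_lt ht)
    _ ≤ ∫⁻ t in Ioi 0, f t / ENNReal.ofReal t := lintegral_mono_set (Ioi_subset_Ioi ht₀.le)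

theorem mu1_pos {α : ℝ} (h₁ : -2 < α) (h₂ : α < 1) : 0 < mu1 α := by
  have := Real.Gamma_pos_of_pos (show 0 < (2 + α) / 2 by linarith)
  have := Real.Gamma_pos_of_pos (show 0 < (1 - α) / 2 by linarith)
  unfold mu1
  positivity

theorem fracGrad1_indicator_Ioo {α a b y : ℝ} (hα : 0 < α) (hab : a < b) (hya : y ≠ a)
    (hyb : y ≠ b) :
    fracGrad1 α ((Ioo a b).indicator 1) y = mu1 α / α * (|y - a| ^ (-α) - |y - b| ^ (-α)) := by
  rw [fracGrad1, integral_sub_mul_indicator_sub hα hab hya hyb]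
  ring

theorem ae_fracGrad1_indicator_Ioo {α a b : ℝ} (hα : 0 < α) (hab : a < b) :
    fracGrad1 α ((Ioo a b).indicator 1)
      =ᵐ[volume] fun y => mu1 α / α * (|y - a| ^ (-α) - |y - b| ^ (-α)) := by
  filter_upwards [measure_eq_zero_iff_ae_notMem.mp (measure_singleton a),
    measure_eq_zero_iff_ae_notMem.mp (measure_singleton b)] with y hya hyb
  exact fracGrad1_indicator_Ioo hα hab hya hyb

theorem stmt5 (α : ℝ) (hα : α ∈ Set.Ioo (0 : ℝ) 1) (x r : ℝ) (hr : 0 < r) :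
    (∀ᵐ y : ℝ, fracGrad1 α ((Set.Ioo (x - r) (x + r)).indicator 1) y
        = mu1 α / α * (|y - x + r| ^ (-α) - |y - x - r| ^ (-α)))
    ∧ (∃ M : ℝ, ∀ t : ℝ, 0 < t →
        t * (volume {y : ℝ |
          t < |fracGrad1 α ((Set.Ioo (x - r) (x + r)).indicator 1) y|}).toReal ^ α ≤ M)
    ∧ (∀ s : ℝ, 1 ≤ s →
        (∫⁻ t in Set.Ioi (0 : ℝ),
          (ENNReal.ofReal t *
            (volume {y : ℝ |
              t < |fracGrad1 α ((Set.Ioo (x - r) (x + r)).indicator 1) y|}) ^ α) ^ s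
            / ENNReal.ofReal t) = ⊤) := by
  have hab : x - r < x + r := by linarith
  have hC : 0 < mu1 α / α := div_pos (mu1_pos (by linarith [hα.1]) hα.2) hα.1
  have hF := ae_fracGrad1_indicator_Ioo hα.1 hab
  -- rewrite `y - x + r` and `y - x - r` as `y - (x - r)` and `y - (x + r)`
  simp only [sub_add, sub_sub]
  refine ⟨hF, ⟨4 ^ α * (2 * (mu1 α / α)), fun t ht => ?_⟩, fun s hs => ?_⟩
  · rw [measure_setOf_lt_abs_congr hF]
    exact mul_volume_setOf_lt_abs_rpow_sub_rpow_le hα.1 hC ht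
  · refine lintegral_Ioi_div_ofReal_eq_top (c := ENNReal.ofReal (mu1 α / α / 2) ^ s)
      (by positivity) (t₀ := mu1 α / α * (x + r - (x - r)) ^ (-α)) (by positivity)
      fun t ht => ?_
    rw [measure_setOf_lt_abs_congr hF]
    gcongr
    exact ofReal_le_mul_volume_setOf_lt_abs_rpow_sub_rpow hα.1 hC hab ht
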